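/- Let U be a finite nonempty set, let S₁, …, S_{n'} be subsets of U, and let k ∈ ℕ. Define distances c(q, j) := 1 if j ∈ S_q and c(q, j) := 3 otherwise, for q ∈ {1,…,n'} and j ∈ U, and lower bounds L_q := 1 for every q. Then there exists I ⊆ {1,…,n'} with |I| ≤ k and ∪_{q∈I} S_q = U if and only if there exist S ⊆ {1,…,n'} and σ : U → S with |S| ≤ k, |σ⁻¹(q)| ≥ 1 for every q ∈ S, and c(σ(j), j) ≤ 1 for every j ∈ U. Consequently, if no k of the sets S₁, …, S_{n'} cover U, then every S ⊆ {1,…,n'} with |S| ≤ k and every σ : U → S with |σ⁻¹(q)| ≥ 1 for all q ∈ S satisfies max_{j∈U} c(σ(j), j) ≥ 3. -/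

import Mathlib

/-! A cover `I` of `U` by at most `k` sets gives the radius-`1` solution that sends each client to
a set of `I` containing it; the facilities actually used form `sel ⊆ I`, so every open facility
serves a client (lower bound `1`). Conversely, in a radius-`1` solution each client lies in the set
of its facility, so the open facilities cover `U`. Distances take only the values `1` and `3`, so a
solution of radius `< 3` already has radius `1`, which gives the gap. -/

open Finset

lemma ite_one_three_le_one_iff {p : Prop} [Decidable p] :
    (if p then (1 : ℝ) else 3) ≤ 1 ↔ p := by
  split_ifs with h <;> norm_num [h]

lemma ite_one_three_lt_three_iff {p : Prop} [Decidable p] :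
    (if p then (1 : ℝ) else 3) < 3 ↔ p := by
  split_ifs with h <;> norm_num [h]

lemma exists_surjective_assignment_of_covers {α ι : Type*} [DecidableEq ι]
    {U : Finset α} (hU : U.Nonempty) {S : ι → Finset α} {I : Finset ι}
    (hI : ∀ j ∈ U, ∃ q ∈ I, j ∈ S q) :
    ∃ (sel : Finset ι) (σ : α → ι), sel ⊆ I ∧ (∀ j ∈ U, σ j ∈ sel) ∧
      (∀ q ∈ sel, ∃ j ∈ U, σ j = q) ∧ ∀ j ∈ U, j ∈ S (σ j) := by
  obtain ⟨j₀, hj₀⟩ := hU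
  obtain ⟨q₀, -⟩ := hI j₀ hj₀
  have : Nonempty ι := ⟨q₀⟩
  choose! σ hσI hσS using hI
  refine ⟨U.image σ, σ, ?_, fun j hj => mem_image_of_mem σ hj, fun q hq => ?_, hσS⟩
  · intro q hq
    obtain ⟨j, hj, rfl⟩ := mem_image.mp hq
    exact hσI j hj
  · simpa using hq

theorem stmt_12 {α : Type*} [DecidableEq α]
    (U : Finset α) (hU : U.Nonempty) (n' : ℕ)
    (S : Fin n' → Finset α) (k : ℕ) :
    ((∃ I : Finset (Fin n'), I.card ≤ k ∧ ∀ j ∈ U, ∃ q ∈ I, j ∈ S q) ↔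
      (∃ (sel : Finset (Fin n')) (σ : α → Fin n'),
        sel.card ≤ k ∧
        (∀ j ∈ U, σ j ∈ sel) ∧
        (∀ q ∈ sel, ∃ j ∈ U, σ j = q) ∧
        (∀ j ∈ U, (if j ∈ S (σ j) then (1 : ℝ) else 3) ≤ 1))) ∧
    ((¬ ∃ I : Finset (Fin n'), I.card ≤ k ∧ ∀ j ∈ U, ∃ q ∈ I, j ∈ S q) →
      ∀ (sel : Finset (Fin n')) (σ : α → Fin n'),
        sel.card ≤ k →
        (∀ j ∈ U, σ j ∈ sel) →
        (∀ q ∈ sel, ∃ j ∈ U, σ j = q) →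
        ∃ j ∈ U, (3 : ℝ) ≤ if j ∈ S (σ j) then (1 : ℝ) else 3) := by
  have covers_of_assignment (sel : Finset (Fin n')) (σ : α → Fin n')
      (hsel : ∀ j ∈ U, σ j ∈ sel) (hσ : ∀ j ∈ U, j ∈ S (σ j)) :
      ∀ j ∈ U, ∃ q ∈ sel, j ∈ S q :=
    fun j hj => ⟨σ j, hsel j hj, hσ j hj⟩
  refine ⟨⟨fun ⟨I, hIk, hI⟩ => ?_, fun ⟨sel, σ, hk, hsel, _, hσ⟩ => ?_⟩,
    fun hno sel σ hk hsel _ => ?_⟩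
  · obtain ⟨sel, σ, hsub, hsel, hsurj, hσ⟩ := exists_surjective_assignment_of_covers hU hI
    exact ⟨sel, σ, (card_le_card hsub).trans hIk, hsel, hsurj,
      fun j hj => ite_one_three_le_one_iff.2 (hσ j hj)⟩
  · exact ⟨sel, hk, covers_of_assignment sel σ hsel
      fun j hj => ite_one_three_le_one_iff.1 (hσ j hj)⟩
  · by_contra! hσ
    exact hno ⟨sel, hk, covers_of_assignment sel σ hsel
      fun j hj => ite_one_three_lt_three_iff.1 (hσ j hj)⟩
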